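/- arXiv:dg-ga/9506009 — 2 statements merged into one kernel-verified Lean document; each statement's English description precedes it below -/
import Mathlib

section
/- Let the circle group S¹ act on a set N and let μ : N → ℝ be S¹-invariant. Let S¹ act on N × ℂ diagonally by s·(n, z) = (s·n, s z), where s z is multiplication of the complex number z by the unit complex number s, and define ν : N × ℂ → ℝ by ν(n, z) = μ(n) + |z|²/2. Then for every a ∈ ℝ the level set ν⁻¹(a) is invariant under the diagonal S¹-action, and its orbit space ν⁻¹(a)/S¹ is in bijection with the disjoint union of the orbit space μ⁻¹(a)/S¹ and the set μ⁻¹((−∞, a)). -/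
noncomputable def symCutUnit (z : ℂ) (hz : z ≠ 0) : Circle :=
  ⟨(starRingEnd ℂ) z / ‖z‖, by
    show _ ∈ Metric.sphere (0:ℂ) 1
    rw [mem_sphere_zero_iff_norm]
    simp [norm_div, Complex.norm_conj, Complex.norm_real, div_self, norm_ne_zero_iff.mpr hz]⟩

@[simp] lemma symCutUnit_coe (z : ℂ) (hz : z ≠ 0) :
    (symCutUnit z hz : ℂ) = (starRingEnd ℂ) z / ‖z‖ := rfl

/-- Set-theoretic content of Lerman's symplectic cutting lemma: if the circle acts on `N`
and `μ : N → ℝ` is invariant, and the circle acts diagonally on `N × ℂ` by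
`s • (n, z) = (s • n, s * z)` with `ν (n, z) = μ n + |z|² / 2`, then for every `a ∈ ℝ`
the level set `ν⁻¹(a)` is invariant, and its orbit space is in bijection with the
disjoint union of the orbit space `μ⁻¹(a)/S¹` and the set `μ⁻¹((-∞, a))`. -/
theorem symplectic_cut_set_theoretic
    (N : Type*) [MulAction Circle N] (μ : N → ℝ)
    (hμ : ∀ (s : Circle) (n : N), μ (s • n) = μ n) (a : ℝ) :
    (∀ (s : Circle) (n : N) (z : ℂ),
      μ n + ‖z‖ ^ 2 / 2 = a →
      μ (s • n) + ‖(s : ℂ) * z‖ ^ 2 / 2 = a) ∧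
    Nonempty
      ((Quot fun (p q : {p : N × ℂ // μ p.1 + ‖p.2‖ ^ 2 / 2 = a}) =>
          ∃ s : Circle, s • p.1.1 = q.1.1 ∧ (s : ℂ) * p.1.2 = q.1.2) ≃
        ((Quot fun (n m : {n : N // μ n = a}) => ∃ s : Circle, s • n.1 = m.1) ⊕
          {n : N // μ n < a})) := by
  have hconj : ∀ s : Circle, (starRingEnd ℂ) (s : ℂ) * (s : ℂ) = 1 := fun s => by
    rw [mul_comm, Complex.mul_conj, Complex.normSq_eq_norm_sq, Circle.norm_coe]; norm_num
  refine ⟨fun s n z h => by rw [hμ, norm_mul, Circle.norm_coe, one_mul, h], ⟨?_⟩⟩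
  set R : Type _ := Quot fun (p q : {p : N × ℂ // μ p.1 + ‖p.2‖ ^ 2 / 2 = a}) =>
      ∃ s : Circle, s • p.1.1 = q.1.1 ∧ (s : ℂ) * p.1.2 = q.1.2 with hR
  set L : Type _ := Quot fun (n m : {n : N // μ n = a}) => ∃ s : Circle, s • n.1 = m.1 with hL
  -- forward map on representatives
  have hlt : ∀ (p : {p : N × ℂ // μ p.1 + ‖p.2‖ ^ 2 / 2 = a}), p.1.2 ≠ 0 →
      μ p.1.1 < a := by
    intro p hz
    have h0 : 0 < ‖p.1.2‖ := norm_pos_iff.mpr hz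
    have : 0 < ‖p.1.2‖ ^ 2 / 2 := by positivity
    linarith [p.2]
  have heqa : ∀ (p : {p : N × ℂ // μ p.1 + ‖p.2‖ ^ 2 / 2 = a}), p.1.2 = 0 →
      μ p.1.1 = a := by
    intro p hz
    have := p.2
    rw [hz] at this
    simpa using this
  let f : {p : N × ℂ // μ p.1 + ‖p.2‖ ^ 2 / 2 = a} → L ⊕ {n : N // μ n < a} :=
    fun p => if hz : p.1.2 = 0 then .inl (Quot.mk _ ⟨p.1.1, heqa p hz⟩)
      else .inr ⟨symCutUnit p.1.2 hz • p.1.1, by rw [hμ]; exact hlt p hz⟩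
  have fsound : ∀ p q, (∃ s : Circle, s • p.1.1 = q.1.1 ∧ (s : ℂ) * p.1.2 = q.1.2) →
      f p = f q := by
    rintro p q ⟨s, h1, h2⟩
    by_cases hz : p.1.2 = 0
    · have hw : q.1.2 = 0 := by rw [← h2, hz, mul_zero]
      simp only [f, dif_pos hz, dif_pos hw]
      exact congrArg _ (Quot.sound ⟨s, h1⟩)
    · have hw : q.1.2 ≠ 0 := by
        rw [← h2]
        exact mul_ne_zero (Circle.coe_ne_zero s) hz
      simp only [f, dif_neg hz, dif_neg hw]
      congr 1
      refine Subtype.ext ?_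
      have hs : symCutUnit q.1.2 hw * s = symCutUnit p.1.2 hz := by
        ext
        rw [Circle.coe_mul, symCutUnit_coe, symCutUnit_coe, ← h2, map_mul, norm_mul,
          Circle.norm_coe, one_mul, div_mul_eq_mul_div]
        congr 1
        rw [mul_comm ((starRingEnd ℂ) (s : ℂ)), mul_assoc, hconj, mul_one]
      show symCutUnit p.1.2 hz • p.1.1 = symCutUnit q.1.2 hw • q.1.1
      rw [← h1, ← mul_smul, hs]
  -- inverse map
  have hsq : ∀ n : N, μ n < a →
      μ n + ‖((Real.sqrt (2 * (a - μ n)) : ℝ) : ℂ)‖ ^ 2 / 2 = a := by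
    intro n h
    rw [Complex.norm_real, Real.norm_eq_abs, abs_of_nonneg (Real.sqrt_nonneg _), Real.sq_sqrt (by linarith)]
    ring
  let gL : {n : N // μ n = a} → R := fun n => Quot.mk _ ⟨(n.1, 0), by simp [n.2]⟩
  have gLsound : ∀ n m, (∃ s : Circle, s • n.1 = m.1) → gL n = gL m := by
    rintro n m ⟨s, hs⟩
    exact Quot.sound ⟨s, hs, by simp⟩
  let g : L ⊕ {n : N // μ n < a} → R := fun x =>
    Sum.rec (Quot.lift gL gLsound)
      (fun n => Quot.mk _ ⟨(n.1, ((Real.sqrt (2 * (a - μ n.1)) : ℝ) : ℂ)), hsq n.1 n.2⟩) x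
  refine ⟨Quot.lift f fsound, g, ?_, ?_⟩
  · refine Quot.ind fun p => ?_
    by_cases hz : p.1.2 = 0
    · show g (f p) = _
      simp only [f, dif_pos hz]
      exact Quot.sound ⟨1, by simp, by simp [hz]⟩
    · show g (f p) = _
      simp only [f, dif_neg hz]
      refine (Quot.sound ?_).symm
      refine ⟨symCutUnit p.1.2 hz, rfl, ?_⟩
      show (symCutUnit p.1.2 hz : ℂ) * p.1.2 =
        ((Real.sqrt (2 * (a - μ (symCutUnit p.1.2 hz • p.1.1))) : ℝ) : ℂ)
      have habs2 : ‖p.1.2‖ ^ 2 = 2 * (a - μ p.1.1) := by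
        have := p.2; linarith
      rw [hμ]
      rw [← habs2, Real.sqrt_sq (norm_nonneg _)]
      rw [symCutUnit_coe, div_mul_eq_mul_div, mul_comm, Complex.mul_conj,
        Complex.normSq_eq_norm_sq]
      push_cast
      rw [pow_two, mul_div_assoc, div_self (by exact_mod_cast norm_ne_zero_iff.mpr hz), mul_one]
  · rintro (x | n)
    · induction x using Quot.ind with
      | _ n =>
        show f _ = _
        simp only [f, dite_true]
    · show f _ = _
      have hr : ((Real.sqrt (2 * (a - μ n.1)) : ℝ) : ℂ) ≠ 0 := by
        have : (0:ℝ) < Real.sqrt (2 * (a - μ n.1)) :=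
          Real.sqrt_pos.mpr (by linarith [n.2])
        exact_mod_cast this.ne'
      simp only [f, dif_neg hr]
      congr 1
      refine Subtype.ext ?_
      have h1 : symCutUnit _ hr = 1 := by
        ext
        rw [symCutUnit_coe, Circle.coe_one, Complex.conj_ofReal, Complex.norm_real, Real.norm_eq_abs,
          abs_of_nonneg (Real.sqrt_nonneg _)]
        exact div_self hr
      show symCutUnit _ hr • n.1 = n.1
      rw [h1, one_smul]
end

section
/- Let the circle group S¹ act on a set N, let μ : N → ℝ be S¹-invariant, let S¹ act on N × ℂ diagonally by s·(n, z) = (s·n, s z), and define ν(n, z) = μ(n) + |z|²/2. Suppose in addition a group G acts on N, the G-action commutes with the S¹-action, and μ is G-invariant. Let G act on N × ℂ through the first factor. Then the G-action on N × ℂ commutes with the diagonal S¹-action, ν is G-invariant, G acts on the orbit space ν⁻¹(a)/S¹ and on μ⁻¹(a)/S¹, and the bijection ν⁻¹(a)/S¹ ≅ (μ⁻¹(a)/S¹) ⊔ μ⁻¹((−∞,a)) is G-equivariant. -/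
/-- The "energy" function `ν (n, z) = μ n + |z|² / 2` on `N × ℂ`. -/
noncomputable def cutNu {N : Type*} (μ : N → ℝ) (p : N × ℂ) : ℝ :=
  μ p.1 + ‖p.2‖ ^ 2 / 2

/-- The diagonal circle action on `N × ℂ`: `s • (n, z) = (s • n, s * z)`. -/
def circleDiag {N : Type*} [MulAction Circle N] (s : Circle) (p : N × ℂ) : N × ℂ :=
  (s • p.1, (s : ℂ) * p.2)

/-- The action of `G` on `N × ℂ` through the first factor. -/
def firstFactor {G N : Type*} [SMul G N] (g : G) (p : N × ℂ) : N × ℂ :=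
  (g • p.1, p.2)

/-- Orbit equivalence of the diagonal circle action on the level set `ν⁻¹(a)`. -/
def cutRelTop (N : Type*) [MulAction Circle N] (μ : N → ℝ) (a : ℝ)
    (p q : {p : N × ℂ // cutNu μ p = a}) : Prop :=
  ∃ s : Circle, circleDiag s p.1 = q.1

/-- Orbit equivalence of the circle action on the level set `μ⁻¹(a)`. -/
def cutRelLevel (N : Type*) [MulAction Circle N] (μ : N → ℝ) (a : ℝ)
    (n m : {n : N // μ n = a}) : Prop :=
  ∃ s : Circle, s • n.1 = m.1

/-- The induced `G`-action on the orbit space `ν⁻¹(a)/S¹`. -/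
def gActTop {G N : Type*} [Group G] [MulAction G N] [MulAction Circle N]
    (μ : N → ℝ) (a : ℝ)
    (hcomm : ∀ (g : G) (s : Circle) (n : N), g • (s • n) = s • (g • n))
    (hGμ : ∀ (g : G) (n : N), μ (g • n) = μ n) (g : G) :
    Quot (cutRelTop N μ a) → Quot (cutRelTop N μ a) :=
  Quot.map
    (fun p => ⟨firstFactor g p.1, by
      have := p.2
      simpa [cutNu, firstFactor, hGμ] using this⟩)
    (fun p q => fun ⟨s, hs⟩ => ⟨s, by
      obtain ⟨h1, h2⟩ := Prod.mk.injEq .. ▸ hs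
      simp only [circleDiag, firstFactor] at *
      exact Prod.ext (by rw [← hcomm, h1]) h2⟩)

/-- The induced `G`-action on the orbit space `μ⁻¹(a)/S¹`. -/
def gActLevel {G N : Type*} [Group G] [MulAction G N] [MulAction Circle N]
    (μ : N → ℝ) (a : ℝ)
    (hcomm : ∀ (g : G) (s : Circle) (n : N), g • (s • n) = s • (g • n))
    (hGμ : ∀ (g : G) (n : N), μ (g • n) = μ n) (g : G) :
    Quot (cutRelLevel N μ a) → Quot (cutRelLevel N μ a) :=
  Quot.map
    (fun n => ⟨g • n.1, by rw [hGμ]; exact n.2⟩)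
    (fun n m => fun ⟨s, hs⟩ => ⟨s, by rw [← hcomm, hs]⟩)

/-- The `G`-action on the sublevel set `μ⁻¹((-∞, a))`. -/
def gActSublevel {G N : Type*} [SMul G N] (μ : N → ℝ) (a : ℝ)
    (hGμ : ∀ (g : G) (n : N), μ (g • n) = μ n) (g : G)
    (n : {n : N // μ n < a}) : {n : N // μ n < a} :=
  ⟨g • n.1, by rw [hGμ]; exact n.2⟩


section CutAux

open Complex

/-- The circle element `conj z / |z|` for nonzero `z`. -/
noncomputable def cutPhase (z : ℂ) (hz : z ≠ 0) : Circle where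
  val := (starRingEnd ℂ) z / ((‖z‖ : ℝ) : ℂ)
  property := mem_sphere_zero_iff_norm.2 <| by
    rw [norm_div, RCLike.norm_conj, Complex.norm_real, Real.norm_eq_abs,
      _root_.abs_of_nonneg (norm_nonneg z), div_self (norm_ne_zero_iff.mpr hz)]

lemma cutPhase_mul (z : ℂ) (hz : z ≠ 0) :
    ((cutPhase z hz : ℂ)) * z = ((‖z‖ : ℝ) : ℂ) := by
  have habs : ((‖z‖ : ℝ) : ℂ) ≠ 0 := by simpa using hz
  have h2 : (starRingEnd ℂ) z * z = ((‖z‖ : ℝ) : ℂ) ^ 2 := by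
    rw [mul_comm, Complex.mul_conj, Complex.normSq_eq_norm_sq]; norm_cast
  show (starRingEnd ℂ) z / ((‖z‖ : ℝ) : ℂ) * z = _
  rw [div_mul_eq_mul_div, h2, sq, mul_div_assoc, div_self habs, mul_one]

lemma cutPhase_circle_mul (s : Circle) (z : ℂ) (hz : z ≠ 0)
    (hz' : (s : ℂ) * z ≠ 0) :
    cutPhase ((s : ℂ) * z) hz' = s⁻¹ * cutPhase z hz := by
  apply Circle.ext
  show (starRingEnd ℂ) ((s : ℂ) * z) / ((‖(s : ℂ) * z‖ : ℝ) : ℂ) = _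
  rw [Circle.coe_mul, Circle.coe_inv_eq_conj]
  show _ = (starRingEnd ℂ) (s : ℂ) * ((starRingEnd ℂ) z / ((‖z‖ : ℝ) : ℂ))
  rw [map_mul, norm_mul, Circle.norm_coe, one_mul, mul_div_assoc]

lemma cutPhase_ofReal (r : ℝ) (hr : 0 < r) (h : (r : ℂ) ≠ 0) :
    cutPhase (r : ℂ) h = 1 := by
  apply Circle.ext
  show (starRingEnd ℂ) (r : ℂ) / ((‖(r : ℂ)‖ : ℝ) : ℂ) = 1
  rw [Complex.conj_ofReal, Complex.norm_real, Real.norm_eq_abs, _root_.abs_of_nonneg hr.le,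
    div_self (by exact_mod_cast hr.ne')]

variable {N : Type*} [MulAction Circle N]

lemma cutPhase_smul_aux (s : Circle) (z : ℂ) (h : z ≠ 0) (n : N)
    (h' : (s : ℂ) * z ≠ 0) :
    cutPhase ((s : ℂ) * z) h' • (s • n) = cutPhase z h • n := by
  rw [cutPhase_circle_mul s z h h', smul_smul, mul_comm s⁻¹ (cutPhase z h), mul_assoc,
    inv_mul_cancel, mul_one]

/-- Forward map on representatives. -/
noncomputable def cutFwdAux (μ : N → ℝ) (a : ℝ) (hμ : ∀ (s : Circle) (n : N), μ (s • n) = μ n)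
    (p : {p : N × ℂ // cutNu μ p = a}) :
    Quot (cutRelLevel N μ a) ⊕ {n : N // μ n < a} :=
  if h : p.1.2 = 0 then
    Sum.inl (Quot.mk _ ⟨p.1.1, by have := p.2; simpa [cutNu, h] using this⟩)
  else
    Sum.inr ⟨(cutPhase p.1.2 h) • p.1.1, by
      rw [hμ]
      have h2 : 0 < ‖p.1.2‖ ^ 2 / 2 := by
        have := norm_pos_iff.mpr h
        positivity
      have := p.2
      simp only [cutNu] at this
      linarith⟩

lemma cutFwdAux_eq_inl (μ : N → ℝ) (a : ℝ) (hμ : ∀ (s : Circle) (n : N), μ (s • n) = μ n)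
    (p : {p : N × ℂ // cutNu μ p = a}) (h : p.1.2 = 0) (hn : μ p.1.1 = a) :
    cutFwdAux μ a hμ p = Sum.inl (Quot.mk _ ⟨p.1.1, hn⟩) := by
  rw [cutFwdAux, dif_pos h]

lemma cutFwdAux_eq_inr (μ : N → ℝ) (a : ℝ) (hμ : ∀ (s : Circle) (n : N), μ (s • n) = μ n)
    (p : {p : N × ℂ // cutNu μ p = a}) (h : p.1.2 ≠ 0)
    (hn : μ (cutPhase p.1.2 h • p.1.1) < a) :
    cutFwdAux μ a hμ p = Sum.inr ⟨cutPhase p.1.2 h • p.1.1, hn⟩ := by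
  rw [cutFwdAux, dif_neg h]


lemma cutFwdAux_wd (μ : N → ℝ) (a : ℝ) (hμ : ∀ (s : Circle) (n : N), μ (s • n) = μ n)
    (p q : {p : N × ℂ // cutNu μ p = a}) (hpq : cutRelTop N μ a p q) :
    cutFwdAux μ a hμ p = cutFwdAux μ a hμ q := by
  obtain ⟨s, hs⟩ := hpq
  obtain ⟨⟨n1, z1⟩, hp1⟩ := p
  obtain ⟨⟨n2, z2⟩, hq1⟩ := q
  have h1 : n2 = s • n1 := (congrArg Prod.fst hs).symm
  have h2 : z2 = (s : ℂ) * z1 := (congrArg Prod.snd hs).symm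
  subst h1; subst h2
  have hp1' : μ n1 + ‖z1‖ ^ 2 / 2 = a := hp1
  by_cases h : z1 = 0
  · have hq : (s : ℂ) * z1 = 0 := by rw [h, mul_zero]
    have hn : μ n1 = a := by simpa [h] using hp1'
    have hn' : μ (s • n1) = a := by rw [hμ]; exact hn
    rw [cutFwdAux_eq_inl μ a hμ ⟨(n1, z1), hp1⟩ h hn,
      cutFwdAux_eq_inl μ a hμ ⟨(s • n1, (s : ℂ) * z1), hq1⟩ hq hn']
    exact congrArg Sum.inl (Quot.sound ⟨s, rfl⟩)
  · have hq : (s : ℂ) * z1 ≠ 0 := mul_ne_zero (Circle.coe_ne_zero s) h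
    have habs : 0 < ‖z1‖ := norm_pos_iff.mpr h
    have hn : μ (cutPhase z1 h • n1) < a := by rw [hμ]; nlinarith
    have hn' : μ (cutPhase ((s : ℂ) * z1) hq • (s • n1)) < a := by
      rw [cutPhase_smul_aux s z1 h n1 hq, hμ]; nlinarith
    rw [cutFwdAux_eq_inr μ a hμ ⟨(n1, z1), hp1⟩ h hn,
      cutFwdAux_eq_inr μ a hμ ⟨(s • n1, (s : ℂ) * z1), hq1⟩ hq hn']
    exact congrArg Sum.inr (Subtype.ext (cutPhase_smul_aux s z1 h n1 hq).symm)

/-- Backward map. -/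
noncomputable def cutBwd (μ : N → ℝ) (a : ℝ) :
    Quot (cutRelLevel N μ a) ⊕ {n : N // μ n < a} → Quot (cutRelTop N μ a) :=
  Sum.elim
    (Quot.lift
      (fun n => Quot.mk _ ⟨(n.1, 0), by simp [cutNu, n.2]⟩)
      (fun n m hnm => by
        obtain ⟨s, hs⟩ := hnm
        exact Quot.sound ⟨s, by simp [circleDiag, hs]⟩))
    (fun n => Quot.mk _ ⟨(n.1, (Real.sqrt (2 * (a - μ n.1)) : ℂ)), by
      have h0 : (0:ℝ) ≤ 2 * (a - μ n.1) := by linarith [n.2]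
      simp only [cutNu, Complex.norm_real, Real.norm_eq_abs, _root_.abs_of_nonneg (Real.sqrt_nonneg _),
        Real.sq_sqrt h0]
      ring⟩)


end CutAux

/-- Equivariant version of Lerman's set-theoretic symplectic cutting lemma: if a group `G`
acts on `N` commuting with the circle action and leaving `μ` invariant, then the `G`-action
on `N × ℂ` through the first factor commutes with the diagonal circle action, `ν` is
`G`-invariant, and the cutting bijection
`ν⁻¹(a)/S¹ ≃ (μ⁻¹(a)/S¹) ⊕ μ⁻¹((-∞, a))` is `G`-equivariant. -/
theorem symplectic_cut_equivariant
    (N : Type*) [MulAction Circle N] (G : Type*) [Group G] [MulAction G N]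
    (μ : N → ℝ) (hμ : ∀ (s : Circle) (n : N), μ (s • n) = μ n)
    (hcomm : ∀ (g : G) (s : Circle) (n : N), g • (s • n) = s • (g • n))
    (hGμ : ∀ (g : G) (n : N), μ (g • n) = μ n) (a : ℝ) :
    (∀ (g : G) (s : Circle) (p : N × ℂ),
      firstFactor g (circleDiag s p) = circleDiag s (firstFactor g p)) ∧
    (∀ (g : G) (p : N × ℂ), cutNu μ (firstFactor g p) = cutNu μ p) ∧
    ∃ e : Quot (cutRelTop N μ a) ≃ (Quot (cutRelLevel N μ a) ⊕ {n : N // μ n < a}),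
      ∀ (g : G) (x : Quot (cutRelTop N μ a)),
        e (gActTop μ a hcomm hGμ g x) =
          Sum.map (gActLevel μ a hcomm hGμ g) (gActSublevel μ a hGμ g) (e x) := by
  refine ⟨fun g s p => Prod.ext (hcomm g s p.1) rfl,
    fun g p => by simp [cutNu, firstFactor, hGμ], ?_⟩
  refine ⟨⟨Quot.lift (cutFwdAux μ a hμ) (cutFwdAux_wd μ a hμ), cutBwd μ a, ?_, ?_⟩, ?_⟩
  · -- left inverse
    intro x
    induction x using Quot.ind with
    | _ p =>
      show cutBwd μ a (cutFwdAux μ a hμ p) = Quot.mk _ p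
      by_cases h : p.1.2 = 0
      · have hn : μ p.1.1 = a := by have := p.2; simpa [cutNu, h] using this
        rw [cutFwdAux_eq_inl μ a hμ p h hn]
        exact Quot.sound ⟨1, by simp [circleDiag, Prod.ext_iff, h]⟩
      · have hp := p.2
        simp only [cutNu] at hp
        have habs : 0 < ‖p.1.2‖ := norm_pos_iff.mpr h
        have hn : μ (cutPhase p.1.2 h • p.1.1) < a := by
          rw [hμ]; nlinarith
        rw [cutFwdAux_eq_inr μ a hμ p h hn]
        refine (Quot.sound ⟨cutPhase p.1.2 h, ?_⟩).symm
        have h2 : 2 * (a - μ (cutPhase p.1.2 h • p.1.1)) = ‖p.1.2‖ ^ 2 := by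
          rw [hμ]; linarith
        refine Prod.ext rfl ?_
        show (cutPhase p.1.2 h : ℂ) * p.1.2 =
          ((Real.sqrt (2 * (a - μ (cutPhase p.1.2 h • p.1.1))) : ℝ) : ℂ)
        rw [cutPhase_mul, h2, Real.sqrt_sq (norm_nonneg _)]
  · -- right inverse
    intro y
    rcases y with y | n
    · induction y using Quot.ind with
      | _ n =>
        show cutFwdAux μ a hμ ⟨(n.1, 0), _⟩ = Sum.inl (Quot.mk _ n)
        rw [cutFwdAux_eq_inl μ a hμ _ rfl n.2]
    · have hr : 0 < Real.sqrt (2 * (a - μ n.1)) :=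
        Real.sqrt_pos.2 (by linarith [n.2])
      have hz : ((Real.sqrt (2 * (a - μ n.1)) : ℝ) : ℂ) ≠ 0 := by
        exact_mod_cast hr.ne'
      have hn : μ (cutPhase _ hz • n.1) < a := by rw [hμ]; exact n.2
      show cutFwdAux μ a hμ ⟨(n.1, _), _⟩ = Sum.inr n
      rw [cutFwdAux_eq_inr μ a hμ _ hz hn]
      exact congrArg Sum.inr (Subtype.ext (by
        show cutPhase _ hz • n.1 = n.1
        rw [cutPhase_ofReal _ hr hz, one_smul]))
  · -- equivariance
    intro g x
    induction x using Quot.ind with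
    | _ p =>
      show cutFwdAux μ a hμ ⟨firstFactor g p.1, _⟩ =
        Sum.map (gActLevel μ a hcomm hGμ g) (gActSublevel μ a hGμ g) (cutFwdAux μ a hμ p)
      by_cases h : p.1.2 = 0
      · have hn : μ p.1.1 = a := by have := p.2; simpa [cutNu, h] using this
        have hn' : μ (g • p.1.1) = a := by rw [hGμ]; exact hn
        rw [cutFwdAux_eq_inl μ a hμ p h hn,
          cutFwdAux_eq_inl μ a hμ ⟨firstFactor g p.1, _⟩ h hn']
        rfl
      · have hp := p.2
        simp only [cutNu] at hp
        have habs : 0 < ‖p.1.2‖ := norm_pos_iff.mpr h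
        have hn : μ (cutPhase p.1.2 h • p.1.1) < a := by rw [hμ]; nlinarith
        have hn' : μ (cutPhase p.1.2 h • (g • p.1.1)) < a := by
          rw [← hcomm, hGμ]; exact hn
        rw [cutFwdAux_eq_inr μ a hμ p h hn,
          cutFwdAux_eq_inr μ a hμ ⟨firstFactor g p.1, _⟩ h hn']
        exact congrArg Sum.inr (Subtype.ext (hcomm g _ _).symm)
end
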